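/- If a nonnegative function d : S × A → ℝ satisfies the Bellman flow constraint Σ_a d(s,a) = (1-γ) μ₀(s) + γ Σ_{s̃,ã} T(s | s̃, ã) d(s̃, ã) for all s, then d equals the state-action occupancy d^π of the policy π defined by π(a|s) = d(s,a)/Σ_{a'} d(s,a') wherever Σ_{a'} d(s,a') > 0. -/

import Mathlib

open scoped BigOperators

/-- Distribution over states at time `t` for the Markov chain induced by policy `π`
and transition kernel `T`, started from `μ₀`. -/
noncomputable def stateDist {S A : Type*} [Fintype S] [Fintype A]
    (μ₀ : S → ℝ) (T : S → A → S → ℝ) (π : S → A → ℝ) : ℕ → S → ℝ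
  | 0 => μ₀
  | t + 1 => fun s' => ∑ s : S, ∑ a : A, stateDist μ₀ T π t s * π s a * T s a s'

/-- Discounted state-action occupancy `d^π(s,a) = (1-γ) ∑_t γ^t Pr(s_t = s, a_t = a)`. -/
noncomputable def occ {S A : Type*} [Fintype S] [Fintype A]
    (γ : ℝ) (μ₀ : S → ℝ) (T : S → A → S → ℝ) (π : S → A → ℝ) (s : S) (a : A) : ℝ :=
  (1 - γ) * ∑' t : ℕ, γ ^ t * (stateDist μ₀ T π t s * π s a)

/-!
Put `ρ s = ∑ a, d s a`. Since `d s ·` vanishes wherever `ρ s = 0`, we have `d = ρ · π`, and the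
flow constraint becomes the fixed-point equation `ρ = (1 - γ) μ₀ + γ ρ P` for the row-stochastic
matrix `P s s' = ∑ a, π s a * T s a s'`. Unrolling it `k` times gives
`ρ = (1 - γ) ∑_{t<k} γ^t μ₀ P^t + γ^k ρ P^k`; as `P^k` is stochastic, the remainder is bounded by
`γ^k ∑ ρ → 0`. Hence `ρ = (1 - γ) ∑_t γ^t μ₀ P^t`, and `μ₀ P^t` is the state distribution at
time `t`.
-/

open Finset Filter Topology Matrix

theorem eq_sum_mul_of_eq_div_sum {ι : Type*} [Fintype ι] {f p : ι → ℝ} (hf : ∀ i, 0 ≤ f i)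
    (hp : ∀ i, 0 < ∑ j, f j → p i = f i / ∑ j, f j) (i : ι) : f i = (∑ j, f j) * p i := by
  rcases (sum_nonneg fun j _ => hf j).lt_or_eq with hpos | hzero
  · rw [hp i hpos, mul_div_cancel₀ _ hpos.ne']
  · rw [← hzero, zero_mul]
    exact (sum_eq_zero_iff_of_nonneg fun j _ => hf j).mp hzero.symm i (mem_univ i)

theorem eq_sum_range_add_of_eq_add_vecMul {R n : Type*} [CommRing R] [Fintype n] [DecidableEq n]
    {M : Matrix n n R} {μ ρ : n → R} {γ : R} (h : ρ = (1 - γ) • μ + γ • (ρ ᵥ* M)) (k : ℕ) :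
    ρ = ∑ t ∈ range k, ((1 - γ) * γ ^ t) • (μ ᵥ* M ^ t) + γ ^ k • (ρ ᵥ* M ^ k) := by
  induction k with
  | zero => simp
  | succ k ih =>
    have hstep : ρ ᵥ* M ^ k = (1 - γ) • (μ ᵥ* M ^ k) + γ • (ρ ᵥ* M ^ (k + 1)) := by
      conv_lhs => rw [h]
      rw [add_vecMul, smul_vecMul, smul_vecMul, vecMul_vecMul, pow_succ']
    conv_lhs => rw [ih, hstep]
    rw [sum_range_succ]
    module

section RowStochastic

variable {n : Type*} [Fintype n] [DecidableEq n] {M : Matrix n n ℝ}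

theorem vecMul_le_sum_of_mem_rowStochastic (hM : M ∈ rowStochastic ℝ n) {x : n → ℝ}
    (hx : ∀ i, 0 ≤ x i) (j : n) :
    (x ᵥ* M) j ≤ ∑ i, x i :=
  sum_le_sum fun i _ => mul_le_of_le_one_right (hx i) (le_one_of_mem_rowStochastic hM)

theorem tendsto_pow_mul_vecMul_pow_of_mem_rowStochastic (hM : M ∈ rowStochastic ℝ n)
    {x : n → ℝ} (hx : ∀ i, 0 ≤ x i) {γ : ℝ} (hγ0 : 0 ≤ γ) (hγ1 : γ < 1) (j : n) :
    Tendsto (fun k : ℕ => γ ^ k * (x ᵥ* M ^ k) j) atTop (𝓝 0) := by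
  have hMk : ∀ k : ℕ, M ^ k ∈ rowStochastic ℝ n := fun k => pow_mem hM k
  have hbound := (tendsto_pow_atTop_nhds_zero_of_lt_one hγ0 hγ1).mul_const (∑ i, x i)
  rw [zero_mul] at hbound
  refine squeeze_zero (fun k => ?_) (fun k => ?_) hbound
  · exact mul_nonneg (pow_nonneg hγ0 k) (nonneg_vecMul_of_mem_rowStochastic (hMk k) hx j)
  · exact mul_le_mul_of_nonneg_left (vecMul_le_sum_of_mem_rowStochastic (hMk k) hx j)
      (pow_nonneg hγ0 k)

theorem hasSum_vecMul_pow_of_eq_add_vecMul (hM : M ∈ rowStochastic ℝ n) {μ ρ : n → ℝ}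
    (hμ : ∀ i, 0 ≤ μ i) (hρ : ∀ i, 0 ≤ ρ i) {γ : ℝ} (hγ0 : 0 ≤ γ) (hγ1 : γ < 1)
    (h : ρ = (1 - γ) • μ + γ • (ρ ᵥ* M)) (j : n) :
    HasSum (fun t : ℕ => (1 - γ) * γ ^ t * (μ ᵥ* M ^ t) j) (ρ j) := by
  have hpartial : ∀ k, ∑ t ∈ range k, (1 - γ) * γ ^ t * (μ ᵥ* M ^ t) j
      = ρ j - γ ^ k * (ρ ᵥ* M ^ k) j := fun k => by
    have hk := congrFun (eq_sum_range_add_of_eq_add_vecMul h k) j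
    simp only [Pi.add_apply, Pi.smul_apply, smul_eq_mul, Finset.sum_apply] at hk
    linarith
  refine (hasSum_iff_tendsto_nat_of_nonneg (fun t => ?_) _).mpr ?_
  · exact mul_nonneg (mul_nonneg (sub_nonneg.mpr hγ1.le) (pow_nonneg hγ0 t))
      (nonneg_vecMul_of_mem_rowStochastic (pow_mem hM t) hμ j)
  · simp only [hpartial]
    simpa using (tendsto_pow_mul_vecMul_pow_of_mem_rowStochastic hM hρ hγ0 hγ1 j).const_sub (ρ j)

end RowStochastic

noncomputable def policyKernel {S A : Type*} [Fintype A] (T : S → A → S → ℝ) (π : S → A → ℝ) :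
    Matrix S S ℝ :=
  Matrix.of fun s s' => ∑ a, π s a * T s a s'

theorem policyKernel_mem_rowStochastic {S A : Type*} [Fintype S] [DecidableEq S] [Fintype A]
    {T : S → A → S → ℝ} {π : S → A → ℝ} (hT0 : ∀ s a s', 0 ≤ T s a s')
    (hTsum : ∀ s a, ∑ s', T s a s' = 1) (hπ0 : ∀ s a, 0 ≤ π s a) (hπsum : ∀ s, ∑ a, π s a = 1) :
    policyKernel T π ∈ rowStochastic ℝ S := by
  refine mem_rowStochastic_iff_sum.mpr ⟨fun s s' => ?_, fun s => ?_⟩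
  · exact sum_nonneg fun a _ => mul_nonneg (hπ0 s a) (hT0 s a s')
  · simp only [policyKernel, of_apply]
    rw [sum_comm]
    simp [← mul_sum, hTsum, hπsum]

theorem stateDist_eq_vecMul_pow {S A : Type*} [Fintype S] [DecidableEq S] [Fintype A]
    (μ₀ : S → ℝ) (T : S → A → S → ℝ) (π : S → A → ℝ) (t : ℕ) :
    stateDist μ₀ T π t = μ₀ ᵥ* policyKernel T π ^ t := by
  induction t with
  | zero => simp [stateDist]
  | succ t ih =>
    rw [pow_succ, ← vecMul_vecMul, ← ih]
    ext s'
    simp only [stateDist, vecMul, dotProduct, policyKernel, of_apply, mul_sum, mul_assoc]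

theorem flow_feasible_eq_occ_general {S A : Type*} [Fintype S] [Fintype A]
    (γ : ℝ) (μ₀ : S → ℝ) (T : S → A → S → ℝ) (π : S → A → ℝ) (d : S → A → ℝ)
    (hγ0 : 0 < γ) (hγ1 : γ < 1)
    (hμ0 : ∀ s, 0 ≤ μ₀ s)
    (hT0 : ∀ s a s', 0 ≤ T s a s') (hTsum : ∀ s a, ∑ s' : S, T s a s' = 1)
    (hπ0 : ∀ s a, 0 ≤ π s a) (hπsum : ∀ s, ∑ a : A, π s a = 1)
    (hd0 : ∀ s a, 0 ≤ d s a)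
    (hflow : ∀ s : S, (∑ a : A, d s a) =
      (1 - γ) * μ₀ s + γ * ∑ st : S, ∑ at' : A, T st at' s * d st at')
    (hπd : ∀ s a, 0 < (∑ a' : A, d s a') → π s a = d s a / (∑ a' : A, d s a')) :
    ∀ s : S, ∀ a : A, occ γ μ₀ T π s a = d s a := by
  classical
  set ρ : S → ℝ := fun s => ∑ a, d s a
  have hd : ∀ s a, d s a = ρ s * π s a := fun s => eq_sum_mul_of_eq_div_sum (hd0 s) (hπd s)
  have hρflow : ρ = (1 - γ) • μ₀ + γ • (ρ ᵥ* policyKernel T π) := by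
    ext s
    change ∑ a, d s a = _
    rw [hflow s]
    simp only [hd, Pi.add_apply, Pi.smul_apply, smul_eq_mul, vecMul, dotProduct,
      policyKernel, of_apply, mul_sum]
    congr 1
    exact sum_congr rfl fun st _ => sum_congr rfl fun a _ => by ring
  have hρ_hasSum := hasSum_vecMul_pow_of_eq_add_vecMul
    (policyKernel_mem_rowStochastic hT0 hTsum hπ0 hπsum) hμ0
    (fun s => sum_nonneg fun a _ => hd0 s a) hγ0.le hγ1 hρflow
  intro s a
  rw [occ, ← tsum_mul_left, hd, ← ((hρ_hasSum s).mul_right (π s a)).tsum_eq]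
  congr 1 with t
  rw [stateDist_eq_vecMul_pow]
  ring

/-- A nonnegative solution of the Bellman flow constraint is the occupancy of the
policy obtained by normalizing it. -/
theorem flow_feasible_eq_occ {S A : Type*} [Fintype S] [Fintype A]
    (γ : ℝ) (μ₀ : S → ℝ) (T : S → A → S → ℝ) (π : S → A → ℝ) (d : S → A → ℝ)
    (hγ0 : 0 < γ) (hγ1 : γ < 1)
    (hμ0 : ∀ s, 0 ≤ μ₀ s) (hμsum : ∑ s : S, μ₀ s = 1)
    (hT0 : ∀ s a s', 0 ≤ T s a s') (hTsum : ∀ s a, ∑ s' : S, T s a s' = 1)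
    (hπ0 : ∀ s a, 0 ≤ π s a) (hπsum : ∀ s, ∑ a : A, π s a = 1)
    (hd0 : ∀ s a, 0 ≤ d s a)
    (hflow : ∀ s : S, (∑ a : A, d s a) =
      (1 - γ) * μ₀ s + γ * ∑ st : S, ∑ at' : A, T st at' s * d st at')
    (hπd : ∀ s a, 0 < (∑ a' : A, d s a') → π s a = d s a / (∑ a' : A, d s a')) :
    ∀ s : S, ∀ a : A, occ γ μ₀ T π s a = d s a :=
  flow_feasible_eq_occ_general γ μ₀ T π d hγ0 hγ1 hμ0 hT0 hTsum hπ0 hπsum hd0 hflow hπd
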